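/- If Ψ₁ : M₁ → H and Ψ₂ : M₂ → H are completely bounded linear maps from C*-algebras into a Hilbert space H equipped with Pisier's OH operator space structure, then the bilinear form (Ψ₁ × Ψ₂)(a ⊗ b) := ⟨Ψ₁(a), conj(Ψ₂(b))⟩ is completely bounded with ‖Ψ₁ × Ψ₂‖_{cb} ≤ ‖Ψ₁‖_{cb} · ‖Ψ₂‖_{cb}; hence it extends to a bounded functional on the operator-projective tensor product M₁ ⊗_{max} M₂. -/

import Mathlib

open scoped ComplexInnerProductSpace Matrix.Norms.L2Operator

/-- `T` is the operator on `ℓ²(Fin m; E)` implemented by the operator matrix `a`. -/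
def ImplementsMat {E : Type*} [NormedAddCommGroup E] [InnerProductSpace ℂ E] {m : ℕ}
    (a : Matrix (Fin m) (Fin m) (E →L[ℂ] E))
    (T : (PiLp 2 fun _ : Fin m => E) →L[ℂ] PiLp 2 fun _ : Fin m => E) : Prop :=
  ∀ (ξ : PiLp 2 fun _ : Fin m => E) (i : Fin m),
    (WithLp.equiv 2 _) (T ξ) i = ∑ j, a i j ((WithLp.equiv 2 _) ξ j)


namespace Stmt8

open Matrix
open scoped Kronecker

open Matrix
open scoped Kronecker

variable {μ ν : Type*} [Fintype μ] [Fintype ν] [DecidableEq μ] [DecidableEq ν]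

omit [DecidableEq μ] in
lemma comp_le_norm (v : EuclideanSpace ℂ μ) (p : μ) : ‖v p‖ ≤ ‖v‖ := by
  rw [EuclideanSpace.norm_eq]
  rw [show ‖v p‖ = Real.sqrt (‖v p‖ ^ 2) by rw [Real.sqrt_sq (norm_nonneg _)]]
  exact Real.sqrt_le_sqrt <| Finset.single_le_sum (f := fun i => ‖v i‖ ^ 2)
    (fun i _ => sq_nonneg _) (Finset.mem_univ p)

omit [DecidableEq μ] in
lemma entry_le_l2_opNorm (A : Matrix μ ν ℂ) (p : μ) (q : ν) : ‖A p q‖ ≤ ‖A‖ := by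
  have h := Matrix.l2_opNorm_mulVec A ((WithLp.equiv 2 (ν → ℂ)).symm (Pi.single q 1))
  have hx : ‖(WithLp.equiv 2 (ν → ℂ)).symm (Pi.single q 1)‖ = 1 := by
    rw [show (WithLp.equiv 2 (ν → ℂ)).symm (Pi.single q 1)
      = EuclideanSpace.single q (1 : ℂ) from rfl, EuclideanSpace.norm_single, norm_one]
  rw [hx, mul_one] at h
  refine le_trans ?_ h
  have h2 := comp_le_norm ((EuclideanSpace.equiv μ ℂ).symm <|
      A *ᵥ (WithLp.equiv 2 (ν → ℂ)).symm (Pi.single q 1)) p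
  refine le_trans ?_ h2
  have he : ((EuclideanSpace.equiv μ ℂ).symm <|
      A *ᵥ (WithLp.equiv 2 (ν → ℂ)).symm (Pi.single q 1)) p = A p q := by
    show (A *ᵥ (Pi.single q 1 : ν → ℂ)) p = A p q
    rw [Matrix.mulVec_single]; simp
  rw [he]

omit [DecidableEq μ] in
lemma l2_opNorm_sq_le_sum_sq (A : Matrix μ ν ℂ) :
    ‖A‖ ^ 2 ≤ ∑ p, ∑ q, ‖A p q‖ ^ 2 := by
  set S : ℝ := ∑ p, ∑ q, ‖A p q‖ ^ 2 with hSdef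
  have hS : (0:ℝ) ≤ S := by positivity
  have hb : ‖A‖ ≤ Real.sqrt S := by
    rw [Matrix.l2_opNorm_def]
    refine ContinuousLinearMap.opNorm_le_bound _ (Real.sqrt_nonneg _) (fun x => ?_)
    set w : μ → ℂ := A *ᵥ (WithLp.equiv 2 (ν → ℂ)) x with hw
    have hTx : ((toEuclideanLin (𝕜 := ℂ) (m := μ) (n := ν)).trans
        LinearMap.toContinuousLinearMap A) x = (WithLp.equiv 2 (μ → ℂ)).symm w := rfl
    rw [hTx]
    have hxsq : ‖x‖ ^ 2 = ∑ q, ‖x q‖ ^ 2 := PiLp.norm_sq_eq_of_L2 _ x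
    have key : ‖(WithLp.equiv 2 (μ → ℂ)).symm w‖ ^ 2 ≤ S * ‖x‖ ^ 2 := by
      have hcomp : ‖(WithLp.equiv 2 (μ → ℂ)).symm w‖ ^ 2 = ∑ p, ‖w p‖ ^ 2 :=
        PiLp.norm_sq_eq_of_L2 _ _
      rw [hcomp, hxsq]
      have hrow : ∀ p : μ, ‖w p‖ ^ 2 ≤ (∑ q, ‖A p q‖ ^ 2) * ∑ q, ‖x q‖ ^ 2 := by
        intro p
        have h1 : ‖w p‖ ≤ ∑ q, ‖A p q‖ * ‖x q‖ :=
          le_trans (norm_sum_le _ _) (Finset.sum_le_sum fun q _ => le_of_eq (norm_mul _ _))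
        exact le_trans (pow_le_pow_left₀ (norm_nonneg _) h1 2)
          (Finset.sum_mul_sq_le_sq_mul_sq _ _ _)
      calc ∑ p, ‖w p‖ ^ 2
          ≤ ∑ p, (∑ q, ‖A p q‖ ^ 2) * ∑ q, ‖x q‖ ^ 2 := Finset.sum_le_sum fun p _ => hrow p
        _ = S * ∑ q, ‖x q‖ ^ 2 := by rw [hSdef, Finset.sum_mul]
    have h3 := Real.sqrt_le_sqrt key
    rw [Real.sqrt_sq (norm_nonneg _)] at h3
    refine h3.trans ?_
    rw [Real.sqrt_mul hS, Real.sqrt_sq (norm_nonneg _)]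
  calc ‖A‖ ^ 2 ≤ Real.sqrt S ^ 2 := pow_le_pow_left₀ (norm_nonneg _) hb 2
    _ = S := Real.sq_sqrt hS

noncomputable def uu {ι : Type} [Fintype ι] (X : ι → Matrix μ μ ℂ) (Y : ι → Matrix ν ν ℂ) :
    Matrix (μ × ν) (μ × ν) ℂ :=
  ∑ s, (X s) ⊗ₖ ((Y s).map (starRingEnd ℂ))

omit [Fintype μ] [Fintype ν] [DecidableEq μ] [DecidableEq ν] in
lemma kronecker_conjTranspose' (A : Matrix μ μ ℂ) (B : Matrix ν ν ℂ) :
    (A ⊗ₖ B)ᴴ = Aᴴ ⊗ₖ Bᴴ := by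
  ext ⟨i, k⟩ ⟨j, l⟩
  simp [Matrix.conjTranspose_apply, Matrix.kroneckerMap_apply, mul_comm]

omit [Fintype ν] [DecidableEq ν] in
lemma map_conj_conjTranspose (B : Matrix ν ν ℂ) :
    (B.map (starRingEnd ℂ))ᴴ = (Bᴴ).map (starRingEnd ℂ) := by
  ext i j
  simp [Matrix.conjTranspose_apply, Matrix.map_apply]

lemma uu_mul_conjTranspose {ι : Type} [Fintype ι] (X : ι → Matrix μ μ ℂ)
    (Y : ι → Matrix ν ν ℂ) :
    uu X Y * (uu X Y)ᴴ =
      uu (fun st : ι × ι => X st.1 * (X st.2)ᴴ) (fun st : ι × ι => Y st.1 * (Y st.2)ᴴ) := by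
  rw [uu, uu, Matrix.conjTranspose_sum, Finset.sum_mul_sum]
  rw [← Finset.sum_product']
  refine Finset.sum_congr rfl fun st _ => ?_
  rcases st with ⟨s, t⟩
  rw [kronecker_conjTranspose', map_conj_conjTranspose, ← Matrix.mul_kronecker_mul,
    ← Matrix.map_mul]

omit [DecidableEq μ] [DecidableEq ν] in
lemma uu_entry {ι : Type} [Fintype ι] (X : ι → Matrix μ μ ℂ) (Y : ι → Matrix ν ν ℂ)
    (p q : μ × ν) :
    uu X Y p q = ∑ s, X s p.1 q.1 * (starRingEnd ℂ) (Y s p.2 q.2) := by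
  rw [uu]
  simp [Matrix.sum_apply, Matrix.kroneckerMap_apply, Matrix.map_apply]

lemma sum_normsq_le {ι : Type} [Fintype ι] (X : ι → Matrix μ μ ℂ) (i j : μ) :
    ∑ s, ‖X s i j‖ ^ 2 ≤ ‖uu X X‖ := by
  have he : uu X X (i, i) (j, j) = ((∑ s, ‖X s i j‖ ^ 2 : ℝ) : ℂ) := by
    rw [uu_entry]
    push_cast
    exact Finset.sum_congr rfl fun s _ => Complex.mul_conj' _
  have := entry_le_l2_opNorm (uu X X) (i, i) (j, j)
  rw [he] at this
  rwa [Complex.norm_real, Real.norm_of_nonneg (by positivity)] at this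

lemma uu_crude {ι : Type} [Fintype ι] (X : ι → Matrix μ μ ℂ) (Y : ι → Matrix ν ν ℂ) :
    ‖uu X Y‖ ^ 2 ≤ ((Fintype.card μ * Fintype.card ν : ℕ) : ℝ) ^ 2 *
      (‖uu X X‖ * ‖uu Y Y‖) := by
  have hentry : ∀ p q : μ × ν, ‖uu X Y p q‖ ^ 2 ≤ ‖uu X X‖ * ‖uu Y Y‖ := by
    intro p q
    rw [uu_entry]
    have h1 : ‖∑ s, X s p.1 q.1 * (starRingEnd ℂ) (Y s p.2 q.2)‖
        ≤ ∑ s, ‖X s p.1 q.1‖ * ‖Y s p.2 q.2‖ := by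
      refine le_trans (norm_sum_le _ _) (Finset.sum_le_sum fun s _ => ?_)
      rw [norm_mul, RCLike.norm_conj]
    refine le_trans (pow_le_pow_left₀ (norm_nonneg _) h1 2) ?_
    refine le_trans (Finset.sum_mul_sq_le_sq_mul_sq _ _ _) ?_
    exact mul_le_mul (sum_normsq_le X _ _) (sum_normsq_le Y _ _)
      (by positivity) (norm_nonneg _)
  refine le_trans (l2_opNorm_sq_le_sum_sq _) ?_
  calc ∑ p, ∑ q, ‖uu X Y p q‖ ^ 2
      ≤ ∑ _p : μ × ν, ∑ _q : μ × ν, ‖uu X X‖ * ‖uu Y Y‖ :=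
        Finset.sum_le_sum fun p _ => Finset.sum_le_sum fun q _ => hentry p q
    _ = ((Fintype.card μ * Fintype.card ν : ℕ) : ℝ) ^ 2 * (‖uu X X‖ * ‖uu Y Y‖) := by
        simp [Finset.sum_const, Fintype.card_prod]
        ring

lemma uu_sq_norm {ι : Type} [Fintype ι] (X : ι → Matrix μ μ ℂ) (Y : ι → Matrix ν ν ℂ) :
    ‖uu (fun st : ι × ι => X st.1 * (X st.2)ᴴ) (fun st : ι × ι => Y st.1 * (Y st.2)ᴴ)‖
      = ‖uu X Y‖ ^ 2 := by
  rw [← uu_mul_conjTranspose]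
  calc ‖uu X Y * (uu X Y)ᴴ‖ = ‖((uu X Y)ᴴ)ᴴ * (uu X Y)ᴴ‖ := by rw [conjTranspose_conjTranspose]
    _ = ‖(uu X Y)ᴴ‖ * ‖(uu X Y)ᴴ‖ := Matrix.l2_opNorm_conjTranspose_mul_self _
    _ = ‖uu X Y‖ ^ 2 := by rw [Matrix.l2_opNorm_conjTranspose]; ring

lemma uu_iter (k : ℕ) :
    ∀ (ι : Type) [Fintype ι] (X : ι → Matrix μ μ ℂ) (Y : ι → Matrix ν ν ℂ),
      (‖uu X Y‖ ^ 2) ^ (2 ^ k) ≤ ((Fintype.card μ * Fintype.card ν : ℕ) : ℝ) ^ 2 *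
        (‖uu X X‖ * ‖uu Y Y‖) ^ (2 ^ k) := by
  induction k with
  | zero => intro ι _ X Y; simpa using uu_crude X Y
  | succ k ih =>
    intro ι _ X Y
    have h := ih (ι × ι) (fun st => X st.1 * (X st.2)ᴴ) (fun st => Y st.1 * (Y st.2)ᴴ)
    rw [uu_sq_norm X Y, uu_sq_norm X X, uu_sq_norm Y Y] at h
    calc (‖uu X Y‖ ^ 2) ^ 2 ^ (k + 1) = ((‖uu X Y‖ ^ 2) ^ 2) ^ 2 ^ k := by
          rw [← pow_mul, ← pow_mul]; ring_nf
      _ ≤ ((Fintype.card μ * Fintype.card ν : ℕ) : ℝ) ^ 2 *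
          (‖uu X X‖ ^ 2 * ‖uu Y Y‖ ^ 2) ^ 2 ^ k := h
      _ = ((Fintype.card μ * Fintype.card ν : ℕ) : ℝ) ^ 2 *
          (‖uu X X‖ * ‖uu Y Y‖) ^ 2 ^ (k + 1) := by
          rw [mul_pow, ← pow_mul, ← pow_mul, ← mul_pow]
          ring_nf

lemma uu_cauchy_schwarz {ι : Type} [Fintype ι] (X : ι → Matrix μ μ ℂ)
    (Y : ι → Matrix ν ν ℂ) :
    ‖uu X Y‖ ^ 2 ≤ ‖uu X X‖ * ‖uu Y Y‖ := by
  set g : ℝ := ‖uu X Y‖ ^ 2 with hg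
  set c : ℝ := ‖uu X X‖ * ‖uu Y Y‖ with hc
  set K : ℝ := ((Fintype.card μ * Fintype.card ν : ℕ) : ℝ) ^ 2 with hK
  have hgn : 0 ≤ g := by positivity
  have hcn : 0 ≤ c := mul_nonneg (norm_nonneg _) (norm_nonneg _)
  have hiter : ∀ k : ℕ, g ^ (2 ^ k) ≤ K * c ^ (2 ^ k) := fun k => uu_iter k ι X Y
  by_contra hcon
  push_neg at hcon
  rcases eq_or_lt_of_le hcn with hczero | hcpos
  · have h0 : g ≤ K * c := by simpa using hiter 0
    nlinarith
  · set r : ℝ := g / c with hr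
    have hr1 : 1 < r := (one_lt_div hcpos).2 hcon
    have hrk : ∀ k : ℕ, r ^ (2 ^ k) ≤ K := by
      intro k
      rw [hr, div_pow, div_le_iff₀ (pow_pos hcpos _)]
      exact hiter k
    obtain ⟨k, hk⟩ := ((tendsto_pow_atTop_atTop_of_one_lt hr1).eventually_gt_atTop K).exists
    have : r ^ k ≤ r ^ (2 ^ k) := pow_le_pow_right₀ hr1.le (Nat.le_of_lt (Nat.lt_two_pow_self (n := k)))
    exact absurd (lt_of_lt_of_le hk (this.trans (hrk k))) (lt_irrefl K)


section Reduction


variable {H : Type*} [NormedAddCommGroup H] [InnerProductSpace ℂ H]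

lemma reduction {m n : ℕ} (x : Fin m × Fin m → H) (y : Fin n × Fin n → H) :
    ‖(Matrix.of fun (p q : Fin m × Fin n) => ⟪y (p.2, q.2), x (p.1, q.1)⟫)‖
      ≤ Real.sqrt ‖(Matrix.of fun (p q : Fin m × Fin m) => ⟪x (p.2, q.2), x (p.1, q.1)⟫)‖ *
        Real.sqrt ‖(Matrix.of fun (p q : Fin n × Fin n) => ⟪y (p.2, q.2), y (p.1, q.1)⟫)‖ := by
  classical
  set V : Submodule ℂ H := Submodule.span ℂ (Set.range x ∪ Set.range y) with hV
  haveI : FiniteDimensional ℂ V :=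
    FiniteDimensional.span_of_finite ℂ ((Set.finite_range x).union (Set.finite_range y))
  set d := Module.finrank ℂ V with hd
  set bV : OrthonormalBasis (Fin d) ℂ V := stdOrthonormalBasis ℂ V with hbV
  have hxV : ∀ p, x p ∈ V := fun p => Submodule.subset_span (Or.inl ⟨p, rfl⟩)
  have hyV : ∀ p, y p ∈ V := fun p => Submodule.subset_span (Or.inr ⟨p, rfl⟩)
  have key : ∀ (v w : H) (hv : v ∈ V) (hw : w ∈ V),
      (⟪w, v⟫ : ℂ) = ∑ s, bV.repr ⟨v, hv⟩ s * (starRingEnd ℂ) (bV.repr ⟨w, hw⟩ s) := by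
    intro v w hv hw
    have h0 : (⟪w, v⟫ : ℂ) = ⟪(⟨w, hw⟩ : V), (⟨v, hv⟩ : V)⟫ := rfl
    rw [h0, ← bV.repr.inner_map_map (⟨w, hw⟩ : V) (⟨v, hv⟩ : V), PiLp.inner_apply]
    exact Finset.sum_congr rfl fun s _ => by
      rw [RCLike.inner_apply]
  set X : Fin d → Matrix (Fin m) (Fin m) ℂ :=
    fun s => Matrix.of fun i j => bV.repr ⟨x (i, j), hxV _⟩ s with hX
  set Y : Fin d → Matrix (Fin n) (Fin n) ℂ :=
    fun s => Matrix.of fun i j => bV.repr ⟨y (i, j), hyV _⟩ s with hY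
  have hM : (Matrix.of fun (p q : Fin m × Fin n) => (⟪y (p.2, q.2), x (p.1, q.1)⟫ : ℂ))
      = uu X Y := by
    ext p q
    rw [Matrix.of_apply, uu_entry, key (x (p.1, q.1)) (y (p.2, q.2)) (hxV _) (hyV _)]
    rfl
  have hG1 : (Matrix.of fun (p q : Fin m × Fin m) => (⟪x (p.2, q.2), x (p.1, q.1)⟫ : ℂ))
      = uu X X := by
    ext p q
    rw [Matrix.of_apply, uu_entry, key (x (p.1, q.1)) (x (p.2, q.2)) (hxV _) (hxV _)]
    rfl
  have hG2 : (Matrix.of fun (p q : Fin n × Fin n) => (⟪y (p.2, q.2), y (p.1, q.1)⟫ : ℂ))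
      = uu Y Y := by
    ext p q
    rw [Matrix.of_apply, uu_entry, key (y (p.1, q.1)) (y (p.2, q.2)) (hyV _) (hyV _)]
    rfl
  rw [hM, hG1, hG2]
  have hcs := uu_cauchy_schwarz X Y
  rw [← Real.sqrt_mul (norm_nonneg _)]
  have h3 := Real.sqrt_le_sqrt hcs
  rwa [Real.sqrt_sq (norm_nonneg _)] at h3


end Reduction
end Stmt8

/-- if `Ψ₁ : M₁ → H`, `Ψ₂ : M₂ → H` are completely bounded maps from
C*-algebras (realized concretely as operator algebras `A₁ ⊆ B(H₁)`, `A₂ ⊆ B(H₂)`) into a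
Hilbert space `H` with Pisier's OH operator space structure (so that the norm of a matrix
`z ∈ M_m(OH)` is `‖(⟪z_kl, z_ij⟫)‖^{1/2}`), then the bilinear form
`(Ψ₁ × Ψ₂)(a ⊗ b) = ⟨Ψ₁(a), conj(Ψ₂(b))⟩` is completely bounded with
`‖Ψ₁ × Ψ₂‖_cb ≤ ‖Ψ₁‖_cb ‖Ψ₂‖_cb`: all its matrix amplifications over the respective
matrix unit balls are bounded by `C₁ C₂`. -/
theorem stmt_8
    {H₁ H₂ H : Type*}
    [NormedAddCommGroup H₁] [InnerProductSpace ℂ H₁] [CompleteSpace H₁]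
    [NormedAddCommGroup H₂] [InnerProductSpace ℂ H₂] [CompleteSpace H₂]
    [NormedAddCommGroup H] [InnerProductSpace ℂ H]
    (A₁ : StarSubalgebra ℂ (H₁ →L[ℂ] H₁)) (A₂ : StarSubalgebra ℂ (H₂ →L[ℂ] H₂))
    (Ψ₁ : (H₁ →L[ℂ] H₁) →ₗ[ℂ] H) (Ψ₂ : (H₂ →L[ℂ] H₂) →ₗ[ℂ] H)
    (C₁ C₂ : ℝ)
    -- complete boundedness of `Ψ₁` into `OH`, with cb norm at most `C₁`
    (hΨ₁ : ∀ (m : ℕ) (a : Matrix (Fin m) (Fin m) (H₁ →L[ℂ] H₁)),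
      (∀ i j, a i j ∈ A₁) →
      ∀ T, ImplementsMat a T →
        Real.sqrt ‖(Matrix.of fun (p q : Fin m × Fin m) =>
          ⟪Ψ₁ (a p.2 q.2), Ψ₁ (a p.1 q.1)⟫)‖ ≤ C₁ * ‖T‖)
    -- complete boundedness of `Ψ₂` into `OH`, with cb norm at most `C₂`
    (hΨ₂ : ∀ (n : ℕ) (b : Matrix (Fin n) (Fin n) (H₂ →L[ℂ] H₂)),
      (∀ i j, b i j ∈ A₂) →
      ∀ T, ImplementsMat b T →
        Real.sqrt ‖(Matrix.of fun (p q : Fin n × Fin n) =>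
          ⟪Ψ₂ (b p.2 q.2), Ψ₂ (b p.1 q.1)⟫)‖ ≤ C₂ * ‖T‖) :
    ∀ (m n : ℕ) (a : Matrix (Fin m) (Fin m) (H₁ →L[ℂ] H₁))
      (b : Matrix (Fin n) (Fin n) (H₂ →L[ℂ] H₂)),
      (∀ i j, a i j ∈ A₁) → (∀ i j, b i j ∈ A₂) →
      ∀ S T, ImplementsMat a S → ImplementsMat b T →
        ‖(Matrix.of fun (p q : Fin m × Fin n) =>
            ⟪Ψ₂ (b p.2 q.2), Ψ₁ (a p.1 q.1)⟫)‖ ≤ (C₁ * ‖S‖) * (C₂ * ‖T‖) := by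
  intro m n a b ha hb S T hS hT
  have h1 := hΨ₁ m a ha S hS
  have h2 := hΨ₂ n b hb T hT
  have hred := Stmt8.reduction (H := H) (fun p => Ψ₁ (a p.1 p.2)) (fun p => Ψ₂ (b p.1 p.2))
  have hb1 : (0:ℝ) ≤ C₁ * ‖S‖ := le_trans (Real.sqrt_nonneg _) h1
  exact le_trans hred (mul_le_mul h1 h2 (Real.sqrt_nonneg _) hb1)
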